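/- arXiv:1508.04938 — 6 statements merged into one kernel-verified Lean document; each statement's English description precedes it below -/
import Mathlib

section
/- Let A and B be continuous linear operators on a complex Hilbert space and let ψ₀ be a vector. Define the sequence (ψ_n) by ψ₁ = A ψ₀ and ψ_n = (1/n)(A ψ_{n-1} + B ψ_{n-2}) for n ≥ 2. Then the power series Σ_{n≥0} ψ_n sⁿ converges absolutely for every s ∈ ℂ (i.e. Σ_{n≥0} ‖ψ_n‖ |s|ⁿ < ∞), and the function ψ(s) = Σ_{n≥0} ψ_n sⁿ defined for real s is differentiable and satisfies dψ/ds = (A + sB) ψ(s) with ψ(0) = ψ₀. -/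
/-!
Taking norms in the recurrence gives `‖ψ (n+2)‖ ≤ (‖A‖ ‖ψ (n+1)‖ + ‖B‖ ‖ψ n‖) / (n+2)`. The two-step
recurrence only guarantees one factor `1/(n+2)` per pair of steps, which yields
`‖ψ n‖ ≤ K M^n / ⌊n/2⌋!`; this is enough for `∑ ‖ψ n‖ rⁿ < ∞` for every `r`. The series may then be
differentiated termwise on every ball, and comparing coefficients, the recurrence
`(n+2) ψ (n+2) = A ψ (n+1) + B ψ n` with `ψ 1 = A ψ 0` is exactly `ψ' = (A + s B) ψ`.
-/

open Nat

theorem summable_pow_div_factorial_half (c : ℝ) :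
    Summable fun n : ℕ => c ^ n / (n / 2)! := by
  apply Summable.even_add_odd
  · refine (Real.summable_pow_div_factorial (c ^ 2)).congr fun k => ?_
    rw [show 2 * k / 2 = k by omega, ← pow_mul]
  · refine ((Real.summable_pow_div_factorial (c ^ 2)).mul_left c).congr fun k => ?_
    rw [show (2 * k + 1) / 2 = k by omega]
    ring

theorem le_mul_pow_div_factorial_half_of_le_recurrence {u : ℕ → ℝ} {a b K M : ℝ}
    (ha : 0 ≤ a) (hb : 0 ≤ b) (hK : 0 ≤ K) (hM : 1 ≤ M) (hab : a + b ≤ M)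
    (h0 : u 0 ≤ K) (h1 : u 1 ≤ K)
    (hrec : ∀ n : ℕ, u (n + 2) ≤ (a * u (n + 1) + b * u n) / (n + 2)) (n : ℕ) :
    u n ≤ K * M ^ n / (n / 2)! := by
  induction n using Nat.strong_induction_on with
  | _ n ih =>
    match n with
    | 0 => simpa using h0
    | 1 => simpa using h1.trans (le_mul_of_one_le_right hK hM)
    | n + 2 =>
      have hC : ∀ m, n ≤ m → m ≤ n + 1 → u m ≤ K * M ^ (n + 1) / (n / 2)! := fun m hnm hmn =>
        (ih m (by omega)).trans (by gcongr)
      calc u (n + 2) ≤ (a * u (n + 1) + b * u n) / (n + 2) := hrec n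
        _ ≤ (a + b) * (K * M ^ (n + 1) / (n / 2)!) / (n + 2) := by
          rw [add_mul]
          gcongr
          exacts [hC _ (by omega) le_rfl, hC _ le_rfl (by omega)]
        _ ≤ M * (K * M ^ (n + 1) / (n / 2)!) / ((n / 2 : ℕ) + 1) := by
          gcongr
          exacts [n.div_le_self 2, one_le_two]
        _ = K * M ^ (n + 2) / ((n + 2) / 2)! := by
          rw [show (n + 2) / 2 = n / 2 + 1 by omega, factorial_succ]
          push_cast
          field_simp
          ring

theorem summable_mul_pow_of_le_recurrence {u : ℕ → ℝ} {a b : ℝ} (ha : 0 ≤ a) (hb : 0 ≤ b)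
    (hu : ∀ n, 0 ≤ u n) (hrec : ∀ n : ℕ, u (n + 2) ≤ (a * u (n + 1) + b * u n) / (n + 2))
    {r : ℝ} (hr : 0 ≤ r) : Summable fun n => u n * r ^ n := by
  set K := max (u 0) (u 1)
  set M := max 1 (a + b)
  refine .of_nonneg_of_le (fun n => by have := hu n; positivity) (fun n => ?_)
    ((summable_pow_div_factorial_half (M * r)).mul_left K)
  have hK : 0 ≤ K := (hu 0).trans (le_max_left _ _)
  calc u n * r ^ n ≤ K * M ^ n / (n / 2)! * r ^ n := by
        gcongr
        exact le_mul_pow_div_factorial_half_of_le_recurrence ha hb hK (le_max_left _ _)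
          (le_max_right _ _) (le_max_left _ _) (le_max_right _ _) hrec n
    _ = K * ((M * r) ^ n / (n / 2)!) := by ring

section PowerSeries

variable {𝕜 E : Type*} [RCLike 𝕜] [NormedAddCommGroup E] [NormedSpace 𝕜 E]
  (A B : E →L[𝕜] E) {ψ : ℕ → E}

theorem summable_norm_mul_pow_of_recurrence
    (hrec : ∀ n : ℕ, ((n : 𝕜) + 2) • ψ (n + 2) = A (ψ (n + 1)) + B (ψ n))
    (r : ℝ) (hr : 0 ≤ r) : Summable fun n => ‖ψ n‖ * r ^ n := by
  refine summable_mul_pow_of_le_recurrence (norm_nonneg A) (norm_nonneg B)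
    (fun n => norm_nonneg _) (fun n => ?_) hr
  have hn : ‖(n : 𝕜) + 2‖ = n + 2 := by exact_mod_cast RCLike.norm_natCast (K := 𝕜) (n + 2)
  rw [le_div_iff₀ (by positivity), mul_comm, ← hn, ← norm_smul, hrec]
  exact (norm_add_le _ _).trans (add_le_add (A.le_opNorm _) (B.le_opNorm _))

theorem hasSum_deriv_of_recurrence (hψ1 : ψ 1 = A (ψ 0))
    (hrec : ∀ n : ℕ, ((n : 𝕜) + 2) • ψ (n + 2) = A (ψ (n + 1)) + B (ψ n))
    {z : 𝕜} (hz : Summable fun n => z ^ n • ψ n) :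
    HasSum (fun n : ℕ => ((n : 𝕜) * z ^ (n - 1)) • ψ n) ((A + z • B) (∑' n, z ^ n • ψ n)) := by
  have hA := (hasSum_nat_add_iff' 1).mpr (A.hasSum hz.hasSum)
  have hB := (B.hasSum hz.hasSum).const_smul z
  rw [← hasSum_nat_add_iff' 2]
  convert hA.add hB using 1
  · funext n
    rw [map_smul, map_smul, smul_smul, ← pow_succ' z n, ← smul_add, ← hrec,
      show n + 2 - 1 = n + 1 by omega, mul_comm, mul_smul]
    push_cast
    rfl
  · simp only [add_apply, smul_apply, map_smul, Finset.sum_range_succ, Finset.range_one,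
      Finset.sum_singleton, cast_zero, cast_one, zero_mul, one_mul, pow_zero, zero_smul, one_smul,
      zero_add, zero_tsub, tsub_self, hψ1]
    abel

variable [CompleteSpace E]

theorem summable_pow_smul_of_summable_norm_mul_pow {a : ℕ → E}
    (ha : ∀ r : ℝ, 0 ≤ r → Summable fun n => ‖a n‖ * r ^ n) (z : 𝕜) :
    Summable fun n => z ^ n • a n :=
  .of_norm_bounded (ha ‖z‖ (norm_nonneg z)) fun n => by rw [norm_smul, norm_pow, mul_comm]

theorem hasDerivAt_tsum_pow_smul {a : ℕ → E}
    (ha : ∀ r : ℝ, 0 ≤ r → Summable fun n => ‖a n‖ * r ^ n) (z : 𝕜) :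
    HasDerivAt (fun w : 𝕜 => ∑' n, w ^ n • a n) (∑' n : ℕ, ((n : 𝕜) * z ^ (n - 1)) • a n) z := by
  set R := ‖z‖ + 1
  have hR : 1 ≤ R := by simp [R]
  have hbound : ∀ (n : ℕ) (y : 𝕜), y ∈ Metric.ball 0 R →
      ‖((n : 𝕜) * y ^ (n - 1)) • a n‖ ≤ ‖a n‖ * (2 * R) ^ n := by
    intro n y hy
    rw [mem_ball_zero_iff] at hy
    rw [norm_smul, norm_mul, norm_pow, RCLike.norm_natCast, mul_pow, mul_comm]
    gcongr ‖a n‖ * (?_ * ?_)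
    · exact_mod_cast n.lt_two_pow_self.le
    · exact (pow_le_pow_left₀ (norm_nonneg y) hy.le _).trans (pow_le_pow_right₀ hR (n.sub_le 1))
  exact hasDerivAt_tsum_of_isPreconnected (g := fun n w => w ^ n • a n)
    (g' := fun n w => ((n : 𝕜) * w ^ (n - 1)) • a n) (ha _ (by positivity)) Metric.isOpen_ball
    (convex_ball 0 R).isPreconnected (fun n y _ => (hasDerivAt_pow n y).smul_const (a n)) hbound
    (Metric.mem_ball_self (by positivity)) (summable_pow_smul_of_summable_norm_mul_pow ha 0)
    (by simp [R])

end PowerSeries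

/-- Let `A`, `B` be continuous linear operators on a complex Hilbert space
and `ψ 0` a vector.  Define `ψ 1 = A (ψ 0)` and `ψ n = (1/n) (A (ψ (n-1)) + B (ψ (n-2)))`
for `n ≥ 2`.  Then the power series `∑ ψ n • sⁿ` converges absolutely for every `s : ℂ`,
and the function `s ↦ ∑' n, sⁿ • ψ n` (for real `s`) satisfies `ψ(0) = ψ 0` and the ODE
`dψ/ds = (A + s B) ψ(s)`. -/
theorem stmt_0 {H : Type*} [NormedAddCommGroup H] [InnerProductSpace ℂ H] [CompleteSpace H]
    (A B : H →L[ℂ] H) (ψ : ℕ → H)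
    (hψ1 : ψ 1 = A (ψ 0))
    (hψrec : ∀ n : ℕ, 2 ≤ n → ψ n = ((n : ℂ))⁻¹ • (A (ψ (n - 1)) + B (ψ (n - 2)))) :
    (∀ s : ℂ, Summable fun n : ℕ => ‖ψ n‖ * ‖s‖ ^ n) ∧
    (∀ f : ℝ → H, f = (fun s : ℝ => ∑' n : ℕ, (s : ℂ) ^ n • ψ n) →
      f 0 = ψ 0 ∧ ∀ s : ℝ, HasDerivAt f ((A + (s : ℂ) • B) (f s)) s) := by
  have hrec : ∀ n : ℕ, ((n : ℂ) + 2) • ψ (n + 2) = A (ψ (n + 1)) + B (ψ n) := fun n => by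
    rw [hψrec (n + 2) (by omega)]
    push_cast
    exact smul_inv_smul₀ (by exact_mod_cast (n + 1).succ_ne_zero) _
  have hnorm := summable_norm_mul_pow_of_recurrence A B hrec
  refine ⟨fun s => hnorm ‖s‖ (norm_nonneg s), ?_⟩
  rintro f rfl
  refine ⟨(tsum_eq_single 0 fun n hn => by simp [hn]).trans (by simp), fun s => ?_⟩
  have hs := summable_pow_smul_of_summable_norm_mul_pow hnorm (s : ℂ)
  rw [← (hasSum_deriv_of_recurrence A B hψ1 hrec hs).tsum_eq]
  simpa [Function.comp_def] using
    (hasDerivAt_tsum_pow_smul hnorm (s : ℂ)).scomp s Complex.ofRealCLM.hasDerivAt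
end

section
/- Let a, b be positive real numbers and define p_n by p₀ = 1, p₁ = a, p_{n+1} = a p_n + n b p_{n-1} for n ≥ 1. Then for every n ≥ 0, p_n = Σ_{k=0}^{⌊n/2⌋} (2k−1)!! · C(n, 2k) · a^{n−2k} b^{k}, where (2k−1)!! is the odd double factorial and C(n,2k) the binomial coefficient. -/
/-!
The closed form satisfies the same two-step recurrence as `p`, term by term:
Pascal's rule `C(n+2, 2k+2) = C(n+1, 2k+1) + C(n+1, 2k+2)`, together with
`(n+1) C(n, 2k) = (2k+1) C(n+1, 2k+1)` and `(2k+1)‼ = (2k+1) (2k-1)‼`, gives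
`t(n+2, k+1) = a t(n+1, k+1) + (n+1) b t(n, k)` for the summands `t(n, k)`, while
`t(n+2, 0) = a t(n+1, 0)`. Two-step induction then identifies `p` with the closed form.
-/

open Finset Nat

theorem doubleFactorial_mul_choose_add_two (n k : ℕ) :
    (2 * k + 1)‼ * (n + 2).choose (2 * k + 2) =
      (2 * k + 1)‼ * (n + 1).choose (2 * k + 2) + (n + 1) * ((2 * k - 1)‼ * n.choose (2 * k)) := by
  have pascal := choose_succ_succ (n + 1) (2 * k + 1)
  have absorb := add_one_mul_choose_eq n (2 * k)
  rw [pascal, doubleFactorial_add_one (2 * k)]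
  calc (2 * k + 1) * (2 * k - 1)‼ * ((n + 1).choose (2 * k + 1) + (n + 1).choose (2 * k + 2))
      = (2 * k + 1) * (2 * k - 1)‼ * (n + 1).choose (2 * k + 2)
          + (2 * k - 1)‼ * ((n + 1).choose (2 * k + 1) * (2 * k + 1)) := by ring
    _ = _ := by rw [← absorb]; ring

theorem choose_mul_pow_succ_sub {R : Type*} [CommSemiring R] (a : R) (n m : ℕ) :
    (n.choose m : R) * a ^ (n + 1 - m) = n.choose m * a ^ (n - m) * a := by
  rcases le_or_gt m n with hmn | hnm
  · rw [Nat.sub_add_comm hmn, pow_succ, mul_assoc]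
  · simp [choose_eq_zero_of_lt hnm]

section MatchingSum

variable {R : Type*} [CommSemiring R] (a b : R)

/-- `(2k-1)‼ C(n, 2k)` is the number of `k`-edge matchings of the complete graph on `n`
vertices, so `matchingSum a b n` weights each matching by `b` per edge and `a` per
unmatched vertex. -/
def matchingTerm (n k : ℕ) : R :=
  ((2 * k - 1)‼ : R) * n.choose (2 * k) * a ^ (n - 2 * k) * b ^ k

def matchingSum (n : ℕ) : R :=
  ∑ k ∈ range (n / 2 + 1), matchingTerm a b n k

theorem matchingTerm_eq_zero {n k : ℕ} (h : n < 2 * k) : matchingTerm a b n k = 0 := by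
  simp [matchingTerm, choose_eq_zero_of_lt h]

theorem sum_range_matchingTerm {n M : ℕ} (h : n / 2 < M) :
    ∑ k ∈ range M, matchingTerm a b n k = matchingSum a b n := by
  refine (sum_subset (range_subset_range.mpr (by omega)) fun k _ hk => ?_).symm
  exact matchingTerm_eq_zero a b (by simp only [mem_range] at hk; omega)

theorem matchingTerm_add_two_zero (n : ℕ) :
    matchingTerm a b (n + 2) 0 = a * matchingTerm a b (n + 1) 0 := by
  simp [matchingTerm, pow_succ, mul_comm]

theorem matchingTerm_add_two_succ (n k : ℕ) :
    matchingTerm a b (n + 2) (k + 1) =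
      a * matchingTerm a b (n + 1) (k + 1) + (n + 1) * b * matchingTerm a b n k := by
  have coeff := congrArg (Nat.cast : ℕ → R) (doubleFactorial_mul_choose_add_two n k)
  have shift := choose_mul_pow_succ_sub a (n + 1) (2 * k + 2)
  push_cast at coeff
  rw [show n + 1 + 1 - (2 * k + 2) = n - 2 * k by omega] at shift
  rw [matchingTerm, matchingTerm, matchingTerm, show 2 * (k + 1) = 2 * k + 2 by ring,
    show 2 * k + 2 - 1 = 2 * k + 1 by omega, show n + 2 - (2 * k + 2) = n - 2 * k by omega]
  calc ((2 * k + 1)‼ : R) * (n + 2).choose (2 * k + 2) * a ^ (n - 2 * k) * b ^ (k + 1)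
      = a ^ (n - 2 * k) * b ^ (k + 1) * ((2 * k + 1)‼ * (n + 2).choose (2 * k + 2)) := by ring
    _ = (2 * k + 1)‼ * b ^ (k + 1) * ((n + 1).choose (2 * k + 2) * a ^ (n - 2 * k))
          + (n + 1) * b * ((2 * k - 1)‼ * n.choose (2 * k) * a ^ (n - 2 * k) * b ^ k) := by
        rw [coeff]; ring
    _ = _ := by rw [shift]; ring

theorem matchingSum_add_two (n : ℕ) :
    matchingSum a b (n + 2) = a * matchingSum a b (n + 1) + (n + 1) * b * matchingSum a b n := by
  rw [matchingSum, show (n + 2) / 2 + 1 = n / 2 + 1 + 1 by omega, sum_range_succ']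
  simp only [matchingTerm_add_two_succ, matchingTerm_add_two_zero, sum_add_distrib, ← mul_sum]
  rw [add_right_comm, ← mul_add, ← sum_range_succ' (matchingTerm a b (n + 1)),
    sum_range_matchingTerm a b (by omega)]
  rfl

end MatchingSum

theorem stmt_4_general (a b : ℝ)
    (p : ℕ → ℝ)
    (hp0 : p 0 = 1) (hp1 : p 1 = a)
    (hprec : ∀ n : ℕ, 1 ≤ n → p (n + 1) = a * p n + n * b * p (n - 1)) :
    ∀ n : ℕ, p n = ∑ k ∈ Finset.range (n / 2 + 1),
      (Nat.doubleFactorial (2 * k - 1) : ℝ) * (n.choose (2 * k) : ℝ) * a ^ (n - 2 * k) * b ^ k := by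
  intro n
  change p n = matchingSum a b n
  induction n using Nat.twoStepInduction with
  | zero => simp [matchingSum, matchingTerm, hp0]
  | one => simp [matchingSum, matchingTerm, hp1]
  | more n ih0 ih1 =>
    have hrec := hprec (n + 1) le_add_self
    rw [add_tsub_cancel_right, Nat.cast_succ] at hrec
    rw [hrec, ih0, ih1, matchingSum_add_two]

/-- For positive reals `a`, `b` and the sequence `p 0 = 1`, `p 1 = a`,
`p (n+1) = a p n + n b p (n-1)` for `n ≥ 1`, one has the explicit formula
`p n = ∑_{k=0}^{⌊n/2⌋} (2k-1)!! C(n,2k) a^(n-2k) b^k`. -/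
theorem stmt_4 (a b : ℝ) (ha : 0 < a) (hb : 0 < b)
    (p : ℕ → ℝ)
    (hp0 : p 0 = 1) (hp1 : p 1 = a)
    (hprec : ∀ n : ℕ, 1 ≤ n → p (n + 1) = a * p n + n * b * p (n - 1)) :
    ∀ n : ℕ, p n = ∑ k ∈ Finset.range (n / 2 + 1),
      (Nat.doubleFactorial (2 * k - 1) : ℝ) * (n.choose (2 * k) : ℝ) * a ^ (n - 2 * k) * b ^ k :=
  stmt_4_general a b p hp0 hp1 hprec
end

section
/- Let a, b be positive real numbers and define p_n by p₀ = 1, p₁ = a, p_{n+1} = a p_n + n b p_{n-1} for n ≥ 1. Then for every n ≥ 0, p_n / n! = Σ_{k=0}^{⌊n/2⌋} a^{n−2k} b^{k} / (k! · (n−2k)! · 2^{k}). -/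
/-!
`p n` is the weighted count of involutions of `n` points, with weight `a` per fixed point and
`b` per transposition; the recurrence comes from deciding whether the last point is fixed or
swapped with one of the other `n` points. An involution with `k` transpositions is chosen in
`n! / (k! (n - 2k)! 2^k)` ways, which is the closed form. Analytically, the right-hand side
`w n` satisfies the same recurrence `(n + 2) w (n + 2) = a w (n + 1) + b w n`, termwise: in the
term with `j` fixed points and `k` transpositions, `n + 2 = j + 2k` splits as `j` (absorbed by
`j!`, leaving a factor `a`) plus `2k` (absorbed by `k! 2^k`, leaving a factor `b`).
-/

open Finset

namespace InvolutionWeight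

variable (a b : ℝ)

noncomputable def term (j k : ℕ) : ℝ :=
  a ^ j * b ^ k / ((k.factorial : ℝ) * (j.factorial : ℝ) * 2 ^ k)

lemma succ_mul_term_succ_left (j k : ℕ) :
    ((j : ℝ) + 1) * term a b (j + 1) k = a * term a b j k := by
  simp only [term, Nat.factorial_succ, pow_succ]
  push_cast
  field_simp

lemma two_mul_succ_mul_term_succ_right (j k : ℕ) :
    2 * ((k : ℝ) + 1) * term a b j (k + 1) = b * term a b j k := by
  simp only [term, Nat.factorial_succ, pow_succ]
  push_cast
  field_simp

/-- Cut off to `0` where `n < 2k`, since there `n - 2 * k` truncates to `0`. -/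
noncomputable def coeff (n k : ℕ) : ℝ :=
  if 2 * k ≤ n then term a b (n - 2 * k) k else 0

lemma coeff_two_mul_add (k j : ℕ) : coeff a b (2 * k + j) k = term a b j k := by
  simp [coeff]

lemma coeff_of_lt {n k : ℕ} (h : n < 2 * k) : coeff a b n k = 0 :=
  if_neg (not_le.mpr h)

lemma coeff_recurrence_zero (n : ℕ) :
    ((n : ℝ) + 2) * coeff a b (n + 2) 0 = a * coeff a b (n + 1) 0 := by
  simpa [coeff, add_assoc, one_add_one_eq_two] using succ_mul_term_succ_left a b (n + 1) 0

lemma coeff_recurrence_succ (n k : ℕ) :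
    ((n : ℝ) + 2) * coeff a b (n + 2) (k + 1) =
      a * coeff a b (n + 1) (k + 1) + b * coeff a b n k := by
  rcases lt_or_ge n (2 * k) with hlt | hle
  · rw [coeff_of_lt a b (by omega), coeff_of_lt a b (by omega), coeff_of_lt a b hlt]
    ring
  obtain ⟨j, rfl⟩ := Nat.exists_eq_add_of_le hle
  rw [coeff_two_mul_add, show 2 * k + j + 2 = 2 * (k + 1) + j by ring, coeff_two_mul_add]
  rcases j with _ | i
  · rw [coeff_of_lt a b (by omega)]
    push_cast
    linear_combination two_mul_succ_mul_term_succ_right a b 0 k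
  · rw [show 2 * k + (i + 1) + 1 = 2 * (k + 1) + i by ring, coeff_two_mul_add]
    push_cast
    linear_combination succ_mul_term_succ_left a b i (k + 1) +
      two_mul_succ_mul_term_succ_right a b (i + 1) k

noncomputable def weight (n : ℕ) : ℝ :=
  ∑ k ∈ range (n / 2 + 1), term a b (n - 2 * k) k

lemma sum_range_coeff {n N : ℕ} (h : n / 2 < N) :
    ∑ k ∈ range N, coeff a b n k = weight a b n := by
  rw [weight, ← sum_subset (range_subset_range.mpr h)]
  · refine sum_congr rfl fun k hk => if_pos ?_
    have := mem_range.mp hk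
    omega
  · intro k _ hk
    exact coeff_of_lt a b (by simp at hk; omega)

lemma weight_recurrence (n : ℕ) :
    ((n : ℝ) + 2) * weight a b (n + 2) = a * weight a b (n + 1) + b * weight a b n := by
  rw [← sum_range_coeff a b (N := n + 3) (by omega), ← sum_range_coeff a b (N := n + 3) (by omega),
    ← sum_range_coeff a b (N := n + 2) (by omega), sum_range_succ' (coeff a b (n + 2)),
    sum_range_succ' (coeff a b (n + 1)), mul_add, mul_add, mul_sum, mul_sum, mul_sum,
    coeff_recurrence_zero]
  simp only [coeff_recurrence_succ, sum_add_distrib]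
  ring

lemma weight_zero : weight a b 0 = 1 := by
  simp [weight, term]

lemma weight_one : weight a b 1 = a := by
  simp [weight, term]

lemma eq_factorial_mul_weight (p : ℕ → ℝ) (hp0 : p 0 = 1) (hp1 : p 1 = a)
    (hprec : ∀ n : ℕ, 1 ≤ n → p (n + 1) = a * p n + n * b * p (n - 1)) (n : ℕ) :
    p n = n.factorial * weight a b n := by
  induction n using Nat.twoStepInduction with
  | zero => simp [hp0, weight_zero]
  | one => simp [hp1, weight_one]
  | more n ih₀ ih₁ =>
    rw [hprec (n + 1) (by omega), Nat.add_sub_cancel, ih₀, ih₁, Nat.factorial_succ (n + 1),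
      Nat.factorial_succ n]
    push_cast
    linear_combination (-(n : ℝ) - 1) * n.factorial * weight_recurrence a b n

end InvolutionWeight

theorem stmt_5_general (a b : ℝ)
    (p : ℕ → ℝ)
    (hp0 : p 0 = 1) (hp1 : p 1 = a)
    (hprec : ∀ n : ℕ, 1 ≤ n → p (n + 1) = a * p n + n * b * p (n - 1)) :
    ∀ n : ℕ, p n / n.factorial = ∑ k ∈ Finset.range (n / 2 + 1),
      a ^ (n - 2 * k) * b ^ k /
        ((k.factorial : ℝ) * ((n - 2 * k).factorial : ℝ) * 2 ^ k) := by
  intro n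
  rw [InvolutionWeight.eq_factorial_mul_weight a b p hp0 hp1 hprec n,
    mul_div_cancel_left₀ _ (Nat.cast_ne_zero.mpr n.factorial_ne_zero)]
  rfl

/-- For positive reals `a`, `b` and the sequence `p 0 = 1`, `p 1 = a`,
`p (n+1) = a p n + n b p (n-1)` for `n ≥ 1`, one has
`p n / n! = ∑_{k=0}^{⌊n/2⌋} a^(n-2k) b^k / (k! (n-2k)! 2^k)`. -/
theorem stmt_5 (a b : ℝ) (ha : 0 < a) (hb : 0 < b)
    (p : ℕ → ℝ)
    (hp0 : p 0 = 1) (hp1 : p 1 = a)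
    (hprec : ∀ n : ℕ, 1 ≤ n → p (n + 1) = a * p n + n * b * p (n - 1)) :
    ∀ n : ℕ, p n / n.factorial = ∑ k ∈ Finset.range (n / 2 + 1),
      a ^ (n - 2 * k) * b ^ k /
        ((k.factorial : ℝ) * ((n - 2 * k).factorial : ℝ) * 2 ^ k) :=
  stmt_5_general a b p hp0 hp1 hprec
end

section
/- Let a, b be positive real numbers and define p_n by p₀ = 1, p₁ = a, p_{n+1} = a p_n + n b p_{n-1} for n ≥ 1. Then for every n ≥ 0, p_n / n! ≤ (1/⌊n/3⌋!) · aⁿ · (1 + b/(2a²))^{n/2}. -/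
/-!
Writing `b = 2a²(s² - 1)` with `s = √(1 + b/(2a²))`, the sequence `B n = n! / ⌊n/3⌋! · (a s)ⁿ`
is a supersolution of the recurrence from `n = 2` on: after dividing by `a² (a s)ᵐ (m+1)! / ⌊m/3⌋!`
the defining inequality reduces to `s + 2(s² - 1) ≤ 3 s²`, because `⌊n/3⌋!` grows by a factor at
most `(m+2)/3` over two steps. Since the recurrence has nonnegative coefficients, `p ≤ B`.
-/

open Nat

theorem le_of_linear_recurrence {p B α β : ℕ → ℝ} (hα : ∀ n, 0 ≤ α n) (hβ : ∀ n, 0 ≤ β n)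
    (hp : ∀ n, p (n + 2) = α n * p (n + 1) + β n * p n)
    (hB : ∀ n, α n * B (n + 1) + β n * B n ≤ B (n + 2))
    (h0 : p 0 ≤ B 0) (h1 : p 1 ≤ B 1) (n : ℕ) : p n ≤ B n := by
  suffices ∀ n, p n ≤ B n ∧ p (n + 1) ≤ B (n + 1) from (this n).1
  intro n
  induction n with
  | zero => exact ⟨h0, h1⟩
  | succ n ih =>
    obtain ⟨hn, hn1⟩ := ih
    refine ⟨hn1, ?_⟩
    calc p (n + 2) = α n * p (n + 1) + β n * p n := hp n
      _ ≤ α n * B (n + 1) + β n * B n := by gcongr <;> simp only [hα, hβ]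
      _ ≤ B (n + 2) := hB n

theorem factorial_div_three_le_succ (n : ℕ) : (n / 3)! ≤ ((n + 1) / 3)! :=
  factorial_le (Nat.div_le_div_right (by omega))

theorem three_mul_factorial_div_three_add_two_le {m : ℕ} (hm : 1 ≤ m) :
    3 * ((m + 2) / 3)! ≤ (m + 2) * (m / 3)! := by
  obtain h | h : (m + 2) / 3 = m / 3 ∨ (m + 2) / 3 = m / 3 + 1 := by omega
  · rw [h]
    exact Nat.mul_le_mul_right _ (by omega)
  · rw [h, factorial_succ, ← mul_assoc]
    exact Nat.mul_le_mul_right _ (by omega)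

noncomputable def majorant (a s : ℝ) (n : ℕ) : ℝ := n ! / ((n / 3)! : ℝ) * (a * s) ^ n

theorem majorant_supersolution {a s : ℝ} (ha : 0 ≤ a) (hs : 0 ≤ s) {m : ℕ} (hm : 1 ≤ m) :
    a * majorant a s (m + 1) + (m + 1) * (2 * a ^ 2 * (s ^ 2 - 1)) * majorant a s m ≤
      majorant a s (m + 2) := by
  set g : ℕ → ℝ := fun n => ((n / 3)! : ℝ)
  have hg : ∀ n, 0 < g n := fun n => by positivity
  have hg_succ : g m ≤ g (m + 1) := by simp only [g]; exact_mod_cast factorial_div_three_le_succ m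
  have hg_two : 3 / g m ≤ (m + 2) / g (m + 2) := by
    rw [div_le_div_iff₀ (hg m) (hg _)]
    simp only [g]
    exact_mod_cast three_mul_factorial_div_three_add_two_le hm
  set K : ℝ := a ^ 2 * (a * s) ^ m * (m + 1)!
  have hK : 0 ≤ K := by positivity
  have hfac : ((m + 2)! : ℝ) = (m + 2) * (m + 1)! := by
    rw [factorial_succ (m + 1)]; push_cast; ring
  calc a * majorant a s (m + 1) + (m + 1) * (2 * a ^ 2 * (s ^ 2 - 1)) * majorant a s m
      = K * (s / g (m + 1)) + K * (2 * (s ^ 2 - 1)) / g m := by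
        simp only [majorant, K, g, factorial_succ m]; push_cast; ring
    _ ≤ K * (s / g m) + K * (2 * (s ^ 2 - 1)) / g m := by gcongr
    _ = K * (s + 2 * (s ^ 2 - 1)) / g m := by ring
    _ ≤ K * (3 * s ^ 2) / g m := by gcongr; nlinarith [sq_nonneg (s - 1 / 2)]
    _ = K * s ^ 2 * (3 / g m) := by ring
    _ ≤ K * s ^ 2 * ((m + 2) / g (m + 2)) := by gcongr
    _ = majorant a s (m + 2) := by simp only [majorant, K, g, hfac]; ring

/-- For positive reals `a`, `b` and the sequence `p 0 = 1`, `p 1 = a`,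
`p (n+1) = a p n + n b p (n-1)` for `n ≥ 1`, one has for every `n`
`p n / n! ≤ (1/⌊n/3⌋!) aⁿ (1 + b/(2a²))^(n/2)`. -/
theorem stmt_7 (a b : ℝ) (ha : 0 < a) (hb : 0 < b)
    (p : ℕ → ℝ)
    (hp0 : p 0 = 1) (hp1 : p 1 = a)
    (hprec : ∀ n : ℕ, 1 ≤ n → p (n + 1) = a * p n + n * b * p (n - 1)) :
    ∀ n : ℕ, p n / n.factorial ≤
      (1 / ((n / 3).factorial : ℝ)) * a ^ n * (1 + b / (2 * a ^ 2)) ^ ((n : ℝ) / 2) := by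
  set s := √(1 + b / (2 * a ^ 2))
  have hs1 : 1 ≤ s := Real.one_le_sqrt.mpr (by simp only [le_add_iff_nonneg_right]; positivity)
  have hb_eq : b = 2 * a ^ 2 * (s ^ 2 - 1) := by
    rw [Real.sq_sqrt (by positivity)]; field_simp; ring
  have hp_le : ∀ n, p n ≤ majorant a s n
    | 0 => by simp [majorant, hp0]
    | n + 1 => by
      refine le_of_linear_recurrence (p := fun n => p (n + 1)) (B := fun n => majorant a s (n + 1))
        (α := fun _ => a) (β := fun n => (n + 2) * b) (fun _ => ha.le) (fun _ => by positivity)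
        (fun n => ?_) (fun n => ?_) ?_ ?_ n
      · simpa [add_assoc] using hprec (n + 2) (by omega)
      · simpa [hb_eq, add_assoc, one_add_one_eq_two] using
          majorant_supersolution ha.le (by linarith) (m := n + 1) (by omega)
      · calc p 1 = a * 1 := by rw [hp1, mul_one]
          _ ≤ a * s := by gcongr
          _ = majorant a s 1 := by norm_num [majorant]
      · calc p 2 = a ^ 2 * (2 * s ^ 2 - 1) := by
              rw [hprec 1 le_rfl, hp1, hp0, hb_eq]; push_cast; ring
          _ ≤ 2 * a ^ 2 * s ^ 2 := by nlinarith
          _ = majorant a s 2 := by norm_num [majorant]; ring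
  intro n
  rw [Real.rpow_div_two_eq_sqrt _ (by positivity), Real.rpow_natCast]
  calc p n / n ! ≤ majorant a s n / n ! := by gcongr; exact hp_le n
    _ = 1 / ((n / 3)! : ℝ) * a ^ n * s ^ n := by
      simp only [majorant]; field_simp; ring
end

section
/- Let A and B be nonzero continuous linear operators on a complex Hilbert space, let ψ₀ be a vector, and define (ψ_n) by ψ₁ = A ψ₀ and ψ_n = (1/n)(A ψ_{n-1} + B ψ_{n-2}) for n ≥ 2. Then ‖ψ_n‖^{1/n} → 0 as n → ∞; in particular the radius of convergence R_c = (limsup_{n→∞} ‖ψ_n‖^{1/n})^{-1} of the series Σ ψ_n sⁿ is infinite. -/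
/-!
Bounding `‖A‖, ‖B‖` by `C` gives `‖ψ (n+2)‖ ≤ C / (n+2) * (‖ψ (n+1)‖ + ‖ψ n‖)`. Once
`C (δ + 1) ≤ n δ²`, the bound `‖ψ m‖ ≤ K δ^m` on two consecutive indices propagates to the
next one, so `‖ψ n‖ = O(δ^n)` for every `δ > 0`, whence `‖ψ n‖^(1/n) → 0`.
-/

open Filter Topology

section RealSequence

variable {a : ℕ → ℝ} {C δ : ℝ}

lemma tendsto_const_rpow_inv_natCast {K : ℝ} (hK : 0 < K) :
    Tendsto (fun n : ℕ ↦ K ^ (n : ℝ)⁻¹) atTop (𝓝 1) := by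
  have hcont : ContinuousAt (fun x : ℝ ↦ K ^ x) 0 := Real.continuousAt_const_rpow hK.ne'
  have h := hcont.tendsto.comp (tendsto_inv_atTop_zero.comp tendsto_natCast_atTop_atTop)
  rwa [Real.rpow_zero] at h

lemma le_mul_pow_succ_succ {K : ℝ} (hC : 0 ≤ C) (hδ : 0 < δ) (hK : 0 ≤ K) {n : ℕ}
    (hn : C * (δ + 1) ≤ (n + 2) * δ ^ 2)
    (hrec : a (n + 2) ≤ C / (n + 2) * (a (n + 1) + a n))
    (h₀ : a n ≤ K * δ ^ n) (h₁ : a (n + 1) ≤ K * δ ^ (n + 1)) :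
    a (n + 2) ≤ K * δ ^ (n + 2) := by
  calc a (n + 2) ≤ C / (n + 2) * (K * δ ^ (n + 1) + K * δ ^ n) := hrec.trans (by gcongr)
    _ = K * δ ^ n * (C * (δ + 1)) / (n + 2) := by ring
    _ ≤ K * δ ^ n * ((n + 2) * δ ^ 2) / (n + 2) := by gcongr
    _ = K * δ ^ (n + 2) := by field_simp; ring

lemma exists_eventually_le_mul_pow (hC : 0 ≤ C)
    (hrec : ∀ n : ℕ, a (n + 2) ≤ C / (n + 2) * (a (n + 1) + a n)) (hδ : 0 < δ) :
    ∃ K, ∀ᶠ n in atTop, a n ≤ K * δ ^ n := by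
  obtain ⟨N, hN⟩ := exists_nat_ge (C * (δ + 1) / δ ^ 2)
  set K := max 0 (max (a N / δ ^ N) (a (N + 1) / δ ^ (N + 1)))
  have hK : 0 ≤ K := le_max_left _ _
  have hbase : a N ≤ K * δ ^ N := by
    rw [← div_le_iff₀ (by positivity)]
    exact (le_max_left _ _).trans (le_max_right _ _)
  have hbase' : a (N + 1) ≤ K * δ ^ (N + 1) := by
    rw [← div_le_iff₀ (by positivity)]
    exact (le_max_right _ _).trans (le_max_right _ _)
  have hpair : ∀ n, N ≤ n → a n ≤ K * δ ^ n ∧ a (n + 1) ≤ K * δ ^ (n + 1) := by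
    intro n hNn
    induction n, hNn using Nat.le_induction with
    | base => exact ⟨hbase, hbase'⟩
    | succ n hNn ih =>
      refine ⟨ih.2, le_mul_pow_succ_succ hC hδ hK ?_ (hrec n) ih.1 ih.2⟩
      have hNn' : (N : ℝ) ≤ n := by exact_mod_cast hNn
      calc C * (δ + 1) = C * (δ + 1) / δ ^ 2 * δ ^ 2 := by field_simp
        _ ≤ (n + 2) * δ ^ 2 := by gcongr; linarith
  exact ⟨K, eventually_atTop.2 ⟨N, fun n hn ↦ (hpair n hn).1⟩⟩

lemma tendsto_rpow_inv_natCast_of_eventually_le_mul_pow (h₀ : ∀ n, 0 ≤ a n)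
    (h : ∀ δ > 0, ∃ K, ∀ᶠ n in atTop, a n ≤ K * δ ^ n) :
    Tendsto (fun n : ℕ ↦ a n ^ (n : ℝ)⁻¹) atTop (𝓝 0) := by
  refine tendsto_order.2 ⟨fun ε hε ↦ Eventually.of_forall fun n ↦
    hε.trans_le (Real.rpow_nonneg (h₀ n) _), fun ε hε ↦ ?_⟩
  obtain ⟨K, hK⟩ := h (ε / 2) (by positivity)
  have hK₁ : 0 < max K 1 := by positivity
  have hroot : ∀ᶠ n : ℕ in atTop, max K 1 ^ (n : ℝ)⁻¹ < 2 :=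
    (tendsto_const_rpow_inv_natCast hK₁).eventually (eventually_lt_nhds one_lt_two)
  filter_upwards [hK, hroot, eventually_ne_atTop 0] with n hn hroot hn₀
  have hδ : (0 : ℝ) ≤ ε / 2 := by positivity
  calc a n ^ (n : ℝ)⁻¹ ≤ (max K 1 * (ε / 2) ^ n) ^ (n : ℝ)⁻¹ := by
        gcongr
        · exact h₀ n
        · exact hn.trans (by gcongr; exact le_max_left _ _)
    _ = max K 1 ^ (n : ℝ)⁻¹ * (ε / 2) := by
        rw [Real.mul_rpow hK₁.le (by positivity), Real.pow_rpow_inv_natCast hδ hn₀]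
    _ < 2 * (ε / 2) := by gcongr
    _ = ε := by ring

end RealSequence

lemma norm_le_div_mul_add_of_recurrence {𝕜 E : Type*} [RCLike 𝕜] [SeminormedAddCommGroup E]
    [NormedSpace 𝕜 E] (A B : E →L[𝕜] E) (ψ : ℕ → E)
    (hψrec : ∀ n : ℕ, 2 ≤ n → ψ n = ((n : 𝕜))⁻¹ • (A (ψ (n - 1)) + B (ψ (n - 2))))
    (n : ℕ) :
    ‖ψ (n + 2)‖ ≤ max ‖A‖ ‖B‖ / (n + 2) * (‖ψ (n + 1)‖ + ‖ψ n‖) := by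
  have hA : ‖A (ψ (n + 1))‖ ≤ max ‖A‖ ‖B‖ * ‖ψ (n + 1)‖ :=
    (A.le_opNorm _).trans (by gcongr; exact le_max_left _ _)
  have hB : ‖B (ψ n)‖ ≤ max ‖A‖ ‖B‖ * ‖ψ n‖ :=
    (B.le_opNorm _).trans (by gcongr; exact le_max_right _ _)
  calc ‖ψ (n + 2)‖ = (n + 2 : ℝ)⁻¹ * ‖A (ψ (n + 1)) + B (ψ n)‖ := by
        rw [hψrec (n + 2) le_add_self, norm_smul, norm_inv, RCLike.norm_natCast]
        push_cast
        rfl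
    _ ≤ (n + 2 : ℝ)⁻¹ * (max ‖A‖ ‖B‖ * ‖ψ (n + 1)‖ + max ‖A‖ ‖B‖ * ‖ψ n‖) := by
        gcongr
        exact (norm_add_le _ _).trans (add_le_add hA hB)
    _ = max ‖A‖ ‖B‖ / (n + 2) * (‖ψ (n + 1)‖ + ‖ψ n‖) := by ring

theorem stmt_8_general {H : Type*} [NormedAddCommGroup H] [InnerProductSpace ℂ H]
    (A B : H →L[ℂ] H) (ψ : ℕ → H)
    (hψrec : ∀ n : ℕ, 2 ≤ n → ψ n = ((n : ℂ))⁻¹ • (A (ψ (n - 1)) + B (ψ (n - 2)))) :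
    Tendsto (fun n : ℕ => ‖ψ n‖ ^ ((n : ℝ))⁻¹) atTop (nhds 0) ∧
    (Filter.atTop.limsup fun n : ℕ => ENNReal.ofReal (‖ψ n‖ ^ ((n : ℝ))⁻¹))⁻¹ = ⊤ := by
  have hroot : Tendsto (fun n : ℕ => ‖ψ n‖ ^ ((n : ℝ))⁻¹) atTop (𝓝 0) :=
    tendsto_rpow_inv_natCast_of_eventually_le_mul_pow (fun n ↦ norm_nonneg _) fun _ hδ ↦
      exists_eventually_le_mul_pow (le_max_of_le_left (norm_nonneg A))
        (norm_le_div_mul_add_of_recurrence A B ψ hψrec) hδ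
  refine ⟨hroot, ?_⟩
  have hroot' := ENNReal.tendsto_ofReal hroot
  rw [ENNReal.ofReal_zero] at hroot'
  rw [hroot'.limsup_eq, ENNReal.inv_zero]

/-- Let `A`, `B` be nonzero continuous linear operators on a complex
Hilbert space and `ψ` the sequence from the recurrence `ψ 1 = A (ψ 0)`,
`ψ n = (1/n)(A ψ_{n-1} + B ψ_{n-2})` for `n ≥ 2`.  Then `‖ψ n‖^(1/n) → 0`, and in
particular the radius of convergence `R_c = (limsup ‖ψ n‖^(1/n))⁻¹` of `∑ ψ n sⁿ`
is infinite. -/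
theorem stmt_8 {H : Type*} [NormedAddCommGroup H] [InnerProductSpace ℂ H]
    (A B : H →L[ℂ] H) (hA : 0 < ‖A‖) (hB : 0 < ‖B‖) (ψ : ℕ → H)
    (hψ1 : ψ 1 = A (ψ 0))
    (hψrec : ∀ n : ℕ, 2 ≤ n → ψ n = ((n : ℂ))⁻¹ • (A (ψ (n - 1)) + B (ψ (n - 2)))) :
    Tendsto (fun n : ℕ => ‖ψ n‖ ^ ((n : ℝ))⁻¹) atTop (nhds 0) ∧
    (Filter.atTop.limsup fun n : ℕ => ENNReal.ofReal (‖ψ n‖ ^ ((n : ℝ))⁻¹))⁻¹ = ⊤ :=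
  stmt_8_general A B ψ hψrec
end

section
/- Let A and B be continuous linear operators on a complex Hilbert space and define operators P_n by P₀ = I, P₁ = A, P_{n+1} = A P_n + n B P_{n-1} for n ≥ 1. Then the operator-valued series U(s) = Σ_{n≥0} (sⁿ/n!) P_n converges absolutely in operator norm for every s ∈ ℂ, and for real s the function s ↦ U(s) is differentiable with dU/ds = (A + sB) U(s) and U(0) = I. In particular U(s) ψ₀ equals the solution ψ(s) of dψ/ds = (A + sB)ψ with ψ(0) = ψ₀. -/
/-!
The recursion gives `‖P n‖ ≤ ‖P 0‖ Mⁿ √(n!)` with `M = ‖A‖ + ‖B‖ + 1`, the point being that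
`(n + 1) √(n!) ≤ √((n + 2)!)` absorbs the factor `n` in front of `B`. Hence the exponential
generating function `U(z) = ∑ zⁿ/n! Pₙ` is entire. The derivative of an exponential generating
function is that of the shifted sequence, and by the recursion `∑ zⁿ/n! Pₙ₊₁ = (A + zB) U(z)`.
Finally `s ↦ U(s) ψ₀` and `ψ` solve the same linear ODE with continuous coefficients and the same
initial value, so they coincide by Grönwall-type uniqueness.
-/

open Nat

theorem summable_pow_div_sqrt_factorial {c : ℝ} (hc : 0 ≤ c) :
    Summable fun n : ℕ => c ^ n / √(n ! : ℝ) := by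
  refine .of_nonneg_of_le (fun n => by positivity) (fun n => ?_)
    ((Real.summable_pow_div_factorial (2 * c ^ 2)).add
      (summable_geometric_of_lt_one (by norm_num : (0 : ℝ) ≤ 1 / 2) (by norm_num)))
  -- AM-GM: `t² = x y` with `x = (2c²)ⁿ/n!`, `y = 2⁻ⁿ`, hence `t ≤ x + y`
  have hfac : (0 : ℝ) < n ! := by positivity
  set t := c ^ n / √(n ! : ℝ)
  have ht : t ^ 2 = (2 * c ^ 2) ^ n / n ! * (1 / 2) ^ n := by
    rw [div_pow, Real.sq_sqrt hfac.le, ← pow_mul, mul_pow, one_div_pow]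
    field_simp
    ring
  have : 0 ≤ t := by positivity
  nlinarith [sq_nonneg ((2 * c ^ 2) ^ n / (n ! : ℝ) - (1 / 2) ^ n),
    (by positivity : (0:ℝ) ≤ (2 * c ^ 2) ^ n / n !), (by positivity : (0:ℝ) ≤ (1 / 2) ^ n)]

theorem succ_mul_sqrt_factorial_le (n : ℕ) : (n + 1 : ℝ) * √(n ! : ℝ) ≤ √((n + 2) ! : ℝ) := by
  rw [← Real.sqrt_sq (by positivity : (0 : ℝ) ≤ n + 1), ← Real.sqrt_mul (by positivity)]
  gcongr
  push_cast [Nat.factorial_succ]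
  nlinarith [(by positivity : (0:ℝ) ≤ n !)]

section ExpGeneratingFunction

variable {𝕜 E : Type*} [RCLike 𝕜] [NormedAddCommGroup E] [NormedSpace 𝕜 E]

noncomputable def egf (P : ℕ → E) (z : 𝕜) : E := ∑' n, (z ^ n / n !) • P n

theorem egf_zero (P : ℕ → E) : egf P (0 : 𝕜) = P 0 := by
  rw [egf, tsum_eq_single 0 fun n hn => by simp [hn]]
  simp

theorem norm_pow_div_factorial_smul (z : 𝕜) (n : ℕ) (x : E) :
    ‖(z ^ n / n !) • x‖ = ‖z‖ ^ n / n ! * ‖x‖ := by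
  rw [norm_smul, norm_div, norm_pow, RCLike.norm_natCast]

theorem succ_mul_pow_div_factorial_succ (z : 𝕜) (n : ℕ) :
    ((n + 1 : ℕ) : 𝕜) * z ^ n / (n + 1)! = z ^ n / n ! := by
  rw [Nat.factorial_succ]
  push_cast
  field_simp

variable [CompleteSpace E] {P : ℕ → E}

theorem hasSum_egf (hP : ∀ r : ℝ, 0 ≤ r → Summable fun n => r ^ n / n ! * ‖P n‖) (z : 𝕜) :
    HasSum (fun n => (z ^ n / n !) • P n) (egf P z) :=
  (Summable.of_norm <| by
    simpa only [norm_pow_div_factorial_smul] using hP ‖z‖ (norm_nonneg z)).hasSum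

theorem hasDerivAt_egf (hP : ∀ r : ℝ, 0 ≤ r → Summable fun n => r ^ n / n ! * ‖P n‖) (z : 𝕜) :
    HasDerivAt (egf P) (egf (fun n => P (n + 1)) z) z := by
  set R := ‖z‖ + 1
  have hR : 1 ≤ R := by linarith [norm_nonneg z]
  have hz : z ∈ Metric.ball (0 : 𝕜) R := mem_ball_zero_iff.mpr (lt_add_one _)
  have hterm : ∀ n (y : 𝕜),
      HasDerivAt (fun y => (y ^ n / n ! : 𝕜) • P n) ((n * y ^ (n - 1) / n ! : 𝕜) • P n) y :=
    fun n y => ((hasDerivAt_pow n y).div_const _).smul_const _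
  have hbound : ∀ n, ∀ y ∈ Metric.ball (0 : 𝕜) R,
      ‖(n * y ^ (n - 1) / n ! : 𝕜) • P n‖ ≤ (2 * R) ^ n / n ! * ‖P n‖ := by
    intro n y hy
    have hyR : ‖y‖ ≤ R := (mem_ball_zero_iff.mp hy).le
    have hcoef : n * ‖y‖ ^ (n - 1) ≤ (2 * R) ^ n := by
      rw [mul_pow]
      exact mul_le_mul (by exact_mod_cast n.lt_two_pow_self.le)
        ((pow_le_pow_left₀ (norm_nonneg _) hyR _).trans (pow_le_pow_right₀ hR (n.sub_le 1)))
        (by positivity) (by positivity)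
    rw [norm_smul, norm_div, norm_mul, norm_pow, RCLike.norm_natCast, RCLike.norm_natCast]
    gcongr
  have hsumDeriv : Summable fun n => (n * z ^ (n - 1) / n ! : 𝕜) • P n :=
    .of_norm_bounded (hP _ (by positivity)) fun n => hbound n z hz
  convert hasDerivAt_tsum_of_isPreconnected (hP (2 * R) (by positivity)) Metric.isOpen_ball
    (convex_ball 0 R).isPreconnected (fun n y _ => hterm n y) hbound hz
    (hasSum_egf hP z).summable hz using 1
  · rfl
  rw [hsumDeriv.tsum_eq_zero_add, egf]
  simp only [CharP.cast_eq_zero, zero_mul, zero_div, zero_smul, zero_add, Nat.add_sub_cancel,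
    succ_mul_pow_div_factorial_succ]

end ExpGeneratingFunction

section Recurrence

variable {𝕜 E : Type*} [RCLike 𝕜] [NormedRing E] [NormedAlgebra 𝕜 E] {A B : E} {P : ℕ → E}

theorem norm_le_of_recurrence (hrec : ∀ n, P (n + 1) = A * P n + (n : 𝕜) • (B * P (n - 1)))
    (n : ℕ) : ‖P n‖ ≤ ‖P 0‖ * (‖A‖ + ‖B‖ + 1) ^ n * √(n ! : ℝ) := by
  set M := ‖A‖ + ‖B‖ + 1
  have hA : ‖A‖ ≤ M := by linarith [norm_nonneg B]
  have hM : ‖A‖ * M + ‖B‖ ≤ M ^ 2 := by nlinarith [norm_nonneg A, norm_nonneg B]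
  induction n using Nat.twoStepInduction with
  | zero => simp
  | one =>
    rw [hrec 0]
    simpa [mul_comm] using
      (norm_mul_le A (P 0)).trans (mul_le_mul_of_nonneg_right hA (norm_nonneg _))
  | more n ih₀ ih₁ =>
    have hstep : ‖P (n + 2)‖ ≤ ‖A‖ * ‖P (n + 1)‖ + (n + 1) * (‖B‖ * ‖P n‖) := by
      rw [hrec (n + 1), Nat.add_sub_cancel]
      refine (norm_add_le _ _).trans (add_le_add (norm_mul_le _ _) ?_)
      rw [norm_smul, RCLike.norm_natCast]
      push_cast
      gcongr
      exact norm_mul_le _ _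
    have h₁ : √((n + 1) ! : ℝ) ≤ √((n + 2) ! : ℝ) := by
      exact Real.sqrt_le_sqrt (by exact_mod_cast Nat.factorial_le (Nat.le_succ _))
    have h₀ := succ_mul_sqrt_factorial_le n
    calc ‖P (n + 2)‖ ≤ ‖A‖ * ‖P (n + 1)‖ + (n + 1) * (‖B‖ * ‖P n‖) := hstep
      _ ≤ ‖A‖ * (‖P 0‖ * M ^ (n + 1) * √((n + 2) ! : ℝ))
          + ‖B‖ * (‖P 0‖ * M ^ n * ((n + 1) * √(n ! : ℝ))) := by
        have := mul_le_mul_of_nonneg_left ih₀ (by positivity : (0 : ℝ) ≤ (n + 1) * ‖B‖)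
        exact add_le_add (mul_le_mul_of_nonneg_left (ih₁.trans (by gcongr)) (norm_nonneg _))
          (by linarith)
      _ ≤ ‖A‖ * (‖P 0‖ * M ^ (n + 1) * √((n + 2) ! : ℝ))
          + ‖B‖ * (‖P 0‖ * M ^ n * √((n + 2) ! : ℝ)) := by gcongr
      _ = (‖A‖ * M + ‖B‖) * (‖P 0‖ * M ^ n * √((n + 2) ! : ℝ)) := by ring
      _ ≤ M ^ 2 * (‖P 0‖ * M ^ n * √((n + 2) ! : ℝ)) := by gcongr
      _ = ‖P 0‖ * M ^ (n + 2) * √((n + 2) ! : ℝ) := by ring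

theorem summable_pow_div_factorial_mul_norm_of_recurrence
    (hrec : ∀ n, P (n + 1) = A * P n + (n : 𝕜) • (B * P (n - 1))) {r : ℝ} (hr : 0 ≤ r) :
    Summable fun n : ℕ => r ^ n / n ! * ‖P n‖ := by
  set M := ‖A‖ + ‖B‖ + 1
  refine .of_nonneg_of_le (fun n => by positivity) (fun n => ?_)
    ((summable_pow_div_sqrt_factorial (by positivity : 0 ≤ r * M)).mul_left ‖P 0‖)
  set q := √(n ! : ℝ)
  have hq : (n ! : ℝ) = q ^ 2 := (Real.sq_sqrt (by positivity)).symm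
  have hq0 : 0 < q := by positivity
  calc r ^ n / n ! * ‖P n‖ ≤ r ^ n / n ! * (‖P 0‖ * M ^ n * q) := by
        gcongr; exact norm_le_of_recurrence hrec n
    _ = ‖P 0‖ * ((r * M) ^ n / q) := by
        rw [hq, mul_pow]; field_simp

theorem egf_succ_of_recurrence (hrec : ∀ n, P (n + 1) = A * P n + (n : 𝕜) • (B * P (n - 1)))
    {z : 𝕜} (hP : HasSum (fun n => (z ^ n / n !) • P n) (egf P z)) :
    egf (fun n => P (n + 1)) z = (A + z • B) * egf P z := by
  have hA : HasSum (fun n => (z ^ n / n ! : 𝕜) • (A * P n)) (A * egf P z) := by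
    simpa only [mul_smul_comm] using hP.mul_left A
  have hB : HasSum (fun n => (z ^ n / n ! : 𝕜) • ((n : 𝕜) • (B * P (n - 1))))
      (z • (B * egf P z)) := by
    refine (hasSum_nat_add_iff' 1).mp ?_
    have hshift : ∀ n, (z ^ (n + 1) / (n + 1)! : 𝕜) • (((n + 1 : ℕ) : 𝕜) • (B * P (n + 1 - 1)))
        = z • (B * ((z ^ n / n !) • P n)) := by
      intro n
      rw [Nat.add_sub_cancel, mul_smul_comm, smul_smul, smul_smul, pow_succ, mul_comm _ z,
        mul_div_assoc, mul_assoc, mul_comm _ ((n + 1 : ℕ) : 𝕜), ← mul_div_assoc,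
        succ_mul_pow_div_factorial_succ]
    simp only [Finset.sum_range_one, Nat.cast_zero, zero_smul, smul_zero, sub_zero]
    exact ((hP.mul_left B).const_smul z).congr_fun hshift
  rw [add_mul, smul_mul_assoc]
  exact ((hA.add hB).congr_fun fun n => by simp only [hrec, smul_add]).tsum_eq

end Recurrence

theorem ODE_solution_unique_of_linear {𝕜 E : Type*} [NontriviallyNormedField 𝕜]
    [NormedAddCommGroup E] [NormedSpace 𝕜 E] [NormedSpace ℝ E] {L : ℝ → E →L[𝕜] E}
    (hL : Continuous L) {f g : ℝ → E} {t₀ : ℝ} (hf : ∀ t, HasDerivAt f (L t (f t)) t)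
    (hg : ∀ t, HasDerivAt g (L t (g t)) t) (heq : f t₀ = g t₀) : f = g := by
  funext t
  obtain ⟨a, b, ht, ht₀⟩ : ∃ a b, t ∈ Set.Ioo a b ∧ t₀ ∈ Set.Ioo a b :=
    ⟨min t t₀ - 1, max t t₀ + 1, by grind, by grind⟩
  obtain ⟨C, hC⟩ := isCompact_Icc.exists_bound_of_continuousOn (hL.continuousOn (s := Set.Icc a b))
  have hLip : ∀ s ∈ Set.Ioo a b, LipschitzWith C.toNNReal (L s) := fun s hs =>
    ContinuousLinearMap.lipschitzWith_of_opNorm_le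
      ((hC s (Set.Ioo_subset_Icc_self hs)).trans (Real.le_coe_toNNReal C))
  exact ODE_solution_unique_of_mem_Ioo (s := fun _ => Set.univ)
    (fun s hs => (hLip s hs).lipschitzOnWith) ht₀ (fun s _ => ⟨hf s, trivial⟩)
    (fun s _ => ⟨hg s, trivial⟩) heq ht

/-- With `P 0 = I`, `P 1 = A`, `P (n+1) = A P n + n B P (n-1)` for `n ≥ 1`,
the operator series `U(s) = ∑ (sⁿ/n!) P n` converges absolutely in operator norm for every
`s : ℂ`; for real `s` the function `U` is differentiable with `dU/ds = (A + sB) U(s)` and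
`U(0) = I`, and `U(s) ψ₀` equals the solution `ψ(s)` of `dψ/ds = (A + sB) ψ` with
`ψ(0) = ψ₀`. -/
theorem stmt_11 {H : Type*} [NormedAddCommGroup H] [InnerProductSpace ℂ H] [CompleteSpace H]
    (A B : H →L[ℂ] H)
    (P : ℕ → H →L[ℂ] H)
    (hP0 : P 0 = 1) (hP1 : P 1 = A)
    (hPrec : ∀ n : ℕ, 1 ≤ n → P (n + 1) = A ∘L P n + (n : ℂ) • (B ∘L P (n - 1))) :
    (∀ s : ℂ, Summable fun n : ℕ => ‖s‖ ^ n / n.factorial * ‖P n‖) ∧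
    (∀ U : ℝ → H →L[ℂ] H,
      U = (fun s : ℝ => ∑' n : ℕ, ((s : ℂ) ^ n / n.factorial) • P n) →
      U 0 = 1 ∧
      (∀ s : ℝ, HasDerivAt U ((A + (s : ℂ) • B) ∘L U s) s) ∧
      (∀ (ψ₀ : H) (ψ : ℝ → H), ψ 0 = ψ₀ →
        (∀ s : ℝ, HasDerivAt ψ ((A + (s : ℂ) • B) (ψ s)) s) →
        ∀ s : ℝ, U s ψ₀ = ψ s)) := by
  have hrec : ∀ n, P (n + 1) = A * P n + (n : ℂ) • (B * P (n - 1))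
    | 0 => by simp [hP0, hP1]
    | n + 1 => hPrec (n + 1) n.succ_pos
  have hP := fun r => summable_pow_div_factorial_mul_norm_of_recurrence (r := r) hrec
  refine ⟨fun s => hP ‖s‖ (norm_nonneg s), fun U hU => ?_⟩
  have hU' : U = fun s : ℝ => egf P (s : ℂ) := hU
  have hderiv (s : ℝ) : HasDerivAt U ((A + (s : ℂ) • B) * U s) s := by
    rw [hU', ← egf_succ_of_recurrence hrec (hasSum_egf hP _)]
    have := (hasDerivAt_egf hP (s : ℂ)).scomp s Complex.ofRealCLM.hasDerivAt
    rw [Complex.ofRealCLM_apply, Complex.ofReal_one, one_smul] at this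
    exact this
  refine ⟨by simp [hU', egf_zero, hP0], hderiv, fun ψ₀ ψ hψ₀ hψ => ?_⟩
  refine congrFun (ODE_solution_unique_of_linear (L := fun s : ℝ => A + (s : ℂ) • B) (t₀ := 0)
    (by fun_prop) (fun s => ?_) hψ ?_)
  · exact ((ContinuousLinearMap.apply ℂ H ψ₀).hasFDerivAt.restrictScalars ℝ).comp_hasDerivAt s
      (hderiv s)
  · simp [hU', egf_zero, hP0, hψ₀]
end
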